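/- arXiv:2411.03331 — 2 statements merged into one kernel-verified Lean document; each statement's English description precedes it below -/
import Mathlib

section
/- (Easy direction of hypergraph Cheeger Inequality) The second smallest eigenvalue λ of L_sym = Π^{-1/2} L Π^{-1/2} satisfies λ ≤ 2Φ(H), where Φ(H) = min over proper nonempty S ⊆ V of Φ(S). -/
/-!
Take a set `S` attaining `Φ(H)` and the test vector `x = 𝟙_S - vol(S)`, which is `Π`-orthogonal
to `𝟙`. Because `P` is stochastic with stationary distribution `φ`, `xᵀLx` is the Dirichlet form
`½ ∑ φ(u) P(u,v) (x(u) - x(v))²`; for `x` only pairs crossing the cut contribute, and stationarity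
makes the flow from `S` to `S̄` equal the flow back, so `xᵀLx` is the cut weight of `S`. Moreover
`xᵀΠx = vol(S) vol(S̄)`, and the larger of the two volumes is at least `½`, so the Rayleigh
quotient of `x` is at most `2 Φ(S)`.
-/

open Finset Matrix

section

variable {V : Type*} [DecidableEq V]

def centeredIndicator (φ : V → ℝ) (S : Finset V) : V → ℝ :=
  fun u => (if u ∈ S then 1 else 0) - ∑ w ∈ S, φ w

theorem centeredIndicator_sub_centeredIndicator (φ : V → ℝ) (S : Finset V) (u v : V) :
    centeredIndicator φ S u - centeredIndicator φ S v
      = (if u ∈ S then 1 else 0) - (if v ∈ S then 1 else 0) :=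
  sub_sub_sub_cancel_right _ _ _

variable [Fintype V]

noncomputable def markovLaplacian (φ : V → ℝ) (P : Matrix V V ℝ) : Matrix V V ℝ :=
  diagonal φ - (2⁻¹ : ℝ) • (diagonal φ * P + Pᵀ * diagonal φ)

variable {φ : V → ℝ} {P : Matrix V V ℝ}

theorem dotProduct_markovLaplacian_mulVec (x : V → ℝ) :
    x ⬝ᵥ markovLaplacian φ P *ᵥ x
      = ∑ u, φ u * x u ^ 2 - ∑ u, ∑ v, φ u * P u v * x u * x v := by
  simp only [markovLaplacian, dotProduct, mulVec, Matrix.sub_apply, Matrix.smul_apply,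
    Matrix.add_apply, diagonal_mul, mul_diagonal, transpose_apply, diagonal_apply, smul_eq_mul,
    sub_mul, sum_sub_distrib, mul_add, add_mul, sum_add_distrib, mul_sub, ite_mul, zero_mul,
    sum_ite_eq, mem_univ, if_true, mul_sum]
  rw [sum_comm (f := fun u v => x u * (2⁻¹ * (P v u * φ v) * x v)), ← sum_add_distrib]
  congr 1
  · exact sum_congr rfl fun u _ => by ring
  · exact sum_congr rfl fun u _ => by
      rw [← sum_add_distrib]; exact sum_congr rfl fun v _ => by ring

theorem dotProduct_markovLaplacian_mulVec_eq_dirichlet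
    (hrow : ∀ u, ∑ v, P u v = 1) (hstat : ∀ v, ∑ u, φ u * P u v = φ v) (x : V → ℝ) :
    x ⬝ᵥ markovLaplacian φ P *ᵥ x
      = 2⁻¹ * ∑ u, ∑ v, φ u * P u v * (x u - x v) ^ 2 := by
  have hout : ∑ u, ∑ v, φ u * P u v * x u ^ 2 = ∑ u, φ u * x u ^ 2 := by
    simp only [mul_right_comm _ _ (x _ ^ 2), ← mul_sum, hrow, mul_one]
  have hin : ∑ u, ∑ v, φ u * P u v * x v ^ 2 = ∑ v, φ v * x v ^ 2 := by
    rw [sum_comm]; simp only [← sum_mul, hstat]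
  have hexp : ∀ u v, φ u * P u v * (x u - x v) ^ 2
      = φ u * P u v * x u ^ 2 - 2 * (φ u * P u v * x u * x v) + φ u * P u v * x v ^ 2 :=
    fun u v => by ring
  simp only [hexp, sum_add_distrib, sum_sub_distrib, ← mul_sum, hout, hin,
    dotProduct_markovLaplacian_mulVec]
  ring

theorem sum_compl_sum_eq_sum_sum_compl
    (hrow : ∀ u, ∑ v, P u v = 1) (hstat : ∀ v, ∑ u, φ u * P u v = φ v) (S : Finset V) :
    ∑ u ∈ Sᶜ, ∑ v ∈ S, φ u * P u v = ∑ u ∈ S, ∑ v ∈ Sᶜ, φ u * P u v := by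
  have hstat' : ∀ v, ∑ u ∈ Sᶜ, φ u * P u v = φ v - ∑ u ∈ S, φ u * P u v := fun v => by
    rw [eq_sub_iff_add_eq, add_comm, sum_add_sum_compl, hstat]
  have hrow' : ∀ u, ∑ v ∈ Sᶜ, φ u * P u v = φ u - ∑ v ∈ S, φ u * P u v := fun u => by
    rw [eq_sub_iff_add_eq, ← mul_sum, ← mul_sum, ← mul_add, add_comm, sum_add_sum_compl,
      hrow, mul_one]
  rw [sum_comm, sum_congr rfl fun v _ => hstat' v, sum_congr rfl fun u _ => hrow' u,
    sum_sub_distrib, sum_sub_distrib, sum_comm (s := S) (t := S)]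

theorem sum_sum_mul_sq_centeredIndicator_sub (S : Finset V) (f : V → V → ℝ) :
    ∑ u, ∑ v, f u v * (centeredIndicator φ S u - centeredIndicator φ S v) ^ 2
      = ∑ u ∈ S, ∑ v ∈ Sᶜ, f u v + ∑ u ∈ Sᶜ, ∑ v ∈ S, f u v := by
  simp only [centeredIndicator_sub_centeredIndicator]
  have hmem : ∀ u ∈ S, ∑ v, f u v * ((if u ∈ S then 1 else 0) - (if v ∈ S then 1 else 0)) ^ 2
      = ∑ v ∈ Sᶜ, f u v := fun u hu => by
    rw [← Fintype.sum_ite_mem Sᶜ]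
    refine sum_congr rfl fun v _ => ?_
    by_cases hv : v ∈ S <;> simp [hu, hv]
  have hnotMem : ∀ u ∈ Sᶜ, ∑ v, f u v * ((if u ∈ S then 1 else 0) - (if v ∈ S then 1 else 0)) ^ 2
      = ∑ v ∈ S, f u v := fun u hu => by
    rw [← Fintype.sum_ite_mem S]
    refine sum_congr rfl fun v _ => ?_
    by_cases hv : v ∈ S <;> simp [mem_compl.mp hu, hv]
  rw [← sum_add_sum_compl S, sum_congr rfl hmem, sum_congr rfl hnotMem]

theorem dotProduct_markovLaplacian_mulVec_centeredIndicator
    (hrow : ∀ u, ∑ v, P u v = 1) (hstat : ∀ v, ∑ u, φ u * P u v = φ v) (S : Finset V) :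
    centeredIndicator φ S ⬝ᵥ markovLaplacian φ P *ᵥ centeredIndicator φ S
      = ∑ u ∈ S, ∑ v ∈ Sᶜ, φ u * P u v := by
  rw [dotProduct_markovLaplacian_mulVec_eq_dirichlet hrow hstat,
    sum_sum_mul_sq_centeredIndicator_sub, sum_compl_sum_eq_sum_sum_compl hrow hstat]
  ring

theorem sum_mul_centeredIndicator (hφsum : ∑ u, φ u = 1) (S : Finset V) :
    ∑ u, φ u * centeredIndicator φ S u = 0 := by
  simp only [centeredIndicator, mul_sub, mul_ite, mul_one, mul_zero, sum_sub_distrib,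
    Fintype.sum_ite_mem, ← sum_mul, hφsum, one_mul, sub_self]

theorem sum_mul_centeredIndicator_sq (hφsum : ∑ u, φ u = 1) (S : Finset V) :
    ∑ u, φ u * centeredIndicator φ S u ^ 2 = (∑ u ∈ S, φ u) * ∑ u ∈ Sᶜ, φ u := by
  have hcompl : ∑ u ∈ Sᶜ, φ u = 1 - ∑ u ∈ S, φ u := by
    rw [eq_sub_iff_add_eq, add_comm, sum_add_sum_compl, hφsum]
  have hsq : ∀ u, φ u * centeredIndicator φ S u ^ 2
      = (if u ∈ S then φ u * (1 - 2 * ∑ w ∈ S, φ w) else 0) + φ u * (∑ w ∈ S, φ w) ^ 2 := by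
    intro u
    by_cases hu : u ∈ S <;> simp only [centeredIndicator, hu, if_true, if_false] <;> ring
  simp only [hsq, sum_add_distrib, Fintype.sum_ite_mem, ← sum_mul, hφsum, hcompl]
  ring

theorem centeredIndicator_of_mem (hφsum : ∑ u, φ u = 1) {S : Finset V} {u : V} (hu : u ∈ S) :
    centeredIndicator φ S u = ∑ w ∈ Sᶜ, φ w := by
  rw [centeredIndicator, if_pos hu, eq_comm, eq_sub_iff_add_eq, sum_compl_add_sum, hφsum]

end

theorem div_le_two_mul_div_min {a b c : ℝ} (hc : 0 ≤ c) (ha : 0 < a) (hb : 0 < b)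
    (hab : a + b = 1) : c / (a * b) ≤ 2 * (c / min a b) := by
  have hmin : min a b ≤ 2 * (a * b) := by
    rcases le_total a b with h | h
    · rw [min_eq_left h]; nlinarith
    · rw [min_eq_right h]; nlinarith
  rw [← mul_div_assoc, div_le_div_iff₀ (mul_pos ha hb) (lt_min ha hb)]
  nlinarith

/-- Easy direction of the hypergraph Cheeger inequality: the second smallest
eigenvalue `λ` of `L_sym` (characterized variationally as the minimum of the
Rayleigh quotient `xᵀLx / xᵀΠx` over nonzero `x` with `x ⊥ Π𝟙`) satisfies
`λ ≤ 2 Φ(H)`. -/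
theorem cheeger_easy_direction
    {V : Type*} [Fintype V] [DecidableEq V]
    (P : Matrix V V ℝ) (hnn : ∀ u v, 0 ≤ P u v) (hrow : ∀ u, ∑ v, P u v = 1)
    (φ : V → ℝ) (hφpos : ∀ u, 0 < φ u) (hφsum : ∑ u, φ u = 1)
    (hstat : ∀ v, ∑ u, φ u * P u v = φ v)
    (L : Matrix V V ℝ)
    (hL : L = Matrix.diagonal φ -
      (2⁻¹ : ℝ) • (Matrix.diagonal φ * P + Pᵀ * Matrix.diagonal φ))
    (lam : ℝ)
    (hlam : IsLeast {r : ℝ | ∃ x : V → ℝ, x ≠ 0 ∧ (∑ u, φ u * x u) = 0 ∧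
      r = (x ⬝ᵥ L.mulVec x) / (∑ u, φ u * (x u) ^ 2)} lam)
    (PhiH : ℝ)
    (hPhiH : IsLeast {r : ℝ | ∃ S : Finset V, S.Nonempty ∧ S ≠ Finset.univ ∧
      r = (∑ u ∈ S, ∑ v ∈ Sᶜ, φ u * P u v) /
            min (∑ u ∈ S, φ u) (∑ u ∈ Sᶜ, φ u)} PhiH) :
    lam ≤ 2 * PhiH := by
  obtain rfl : L = markovLaplacian φ P := hL
  obtain ⟨S, hS, hSc, rfl⟩ := hPhiH.1
  have hvolS : 0 < ∑ u ∈ S, φ u := sum_pos (fun u _ => hφpos u) hS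
  have hvolSc : 0 < ∑ u ∈ Sᶜ, φ u :=
    sum_pos (fun u _ => hφpos u) (nonempty_iff_ne_empty.2 (by simpa using hSc))
  have hx : centeredIndicator φ S ≠ 0 := fun h => by
    obtain ⟨u, hu⟩ := hS
    have hxu := congrFun h u
    rw [centeredIndicator_of_mem hφsum hu, Pi.zero_apply] at hxu
    exact hvolSc.ne' hxu
  have hcut : 0 ≤ ∑ u ∈ S, ∑ v ∈ Sᶜ, φ u * P u v :=
    sum_nonneg fun u _ => sum_nonneg fun v _ => mul_nonneg (hφpos u).le (hnn u v)
  calc lam ≤ (∑ u ∈ S, ∑ v ∈ Sᶜ, φ u * P u v) / ((∑ u ∈ S, φ u) * ∑ u ∈ Sᶜ, φ u) :=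
        hlam.2 ⟨centeredIndicator φ S, hx, sum_mul_centeredIndicator hφsum S, by
          rw [dotProduct_markovLaplacian_mulVec_centeredIndicator hrow hstat,
            sum_mul_centeredIndicator_sq hφsum]⟩
    _ ≤ _ := div_le_two_mul_div_min hcut hvolS hvolSc (by rw [sum_add_sum_compl, hφsum])
end

section
/- (Hard direction of hypergraph Cheeger Inequality) The second smallest eigenvalue λ of L_sym = Π^{-1/2} L Π^{-1/2} satisfies λ ≥ Φ(H)²/2, where Φ(H) = min over proper nonempty S ⊆ V of Φ(S). -/
open Finset Matrix

lemma tele_sum (r : ℕ → ℝ) {i n : ℕ} (hin : i ≤ n) :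
    ∑ k ∈ Finset.Ico i n, (r k - r (k+1)) = r i - r n := by
  rw [Finset.sum_Ico_eq_sub _ hin, Finset.sum_range_sub' r, Finset.sum_range_sub' r]
  ring

lemma two_mul_sum_pairs_le {n : ℕ} (F : Fin n → Fin n → ℝ)
    (hsym : ∀ i j, F i j = F j i) (hnn : ∀ i j, 0 ≤ F i j) :
    2 * ∑ p ∈ Finset.univ.filter (fun p : Fin n × Fin n => p.1 < p.2), F p.1 p.2
      ≤ ∑ i, ∑ j, F i j := by
  classical
  set s := Finset.univ.filter (fun p : Fin n × Fin n => p.1 < p.2) with hs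
  have himg : Finset.univ.filter (fun p : Fin n × Fin n => p.2 < p.1) = s.image Prod.swap := by
    ext p
    simp only [hs, Finset.mem_image, Finset.mem_filter, Finset.mem_univ, true_and]
    constructor
    · intro hp; exact ⟨p.swap, hp, p.swap_swap⟩
    · rintro ⟨q, hq, rfl⟩; exact hq
  have hswap : ∑ p ∈ s, F p.1 p.2
      = ∑ p ∈ Finset.univ.filter (fun p : Fin n × Fin n => p.2 < p.1), F p.1 p.2 := by
    rw [himg, Finset.sum_image (by intro a _ b _ h; exact Prod.swap_injective h)]
    exact Finset.sum_congr rfl fun p _ => (hsym p.2 p.1) ▸ rfl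
  have hsub : Finset.univ.filter (fun p : Fin n × Fin n => p.2 < p.1)
      ⊆ Finset.univ.filter (fun p : Fin n × Fin n => ¬ p.1 < p.2) := by
    intro p hp
    simp only [Finset.mem_filter, Finset.mem_univ, true_and] at *
    omega
  have h1 : ∑ i, ∑ j, F i j = ∑ p : Fin n × Fin n, F p.1 p.2 := by
    rw [← Finset.sum_product']; rfl
  rw [h1, ← Finset.sum_filter_add_sum_filter_not Finset.univ
    (fun p : Fin n × Fin n => p.1 < p.2) (fun p => F p.1 p.2)]
  have h2 : ∑ p ∈ Finset.univ.filter (fun p : Fin n × Fin n => p.2 < p.1), F p.1 p.2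
      ≤ ∑ p ∈ Finset.univ.filter (fun p : Fin n × Fin n => ¬ p.1 < p.2), F p.1 p.2 :=
    Finset.sum_le_sum_of_subset_of_nonneg hsub (fun p _ _ => hnn p.1 p.2)
  nlinarith [hswap, h2]

lemma abel_sum {n : ℕ} (r : ℕ → ℝ) (c : Fin n → ℝ) :
    ∑ k ∈ Finset.range n, (r k - r (k+1)) *
        ∑ i ∈ Finset.univ.filter (fun i : Fin n => (i:ℕ) ≤ k), c i
      = ∑ i : Fin n, (r i - r n) * c i := by
  classical
  calc ∑ k ∈ Finset.range n, (r k - r (k+1)) *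
        ∑ i ∈ Finset.univ.filter (fun i : Fin n => (i:ℕ) ≤ k), c i
      = ∑ k ∈ Finset.range n, ∑ i : Fin n,
          (if (i:ℕ) ≤ k then (r k - r (k+1)) * c i else 0) := by
        refine Finset.sum_congr rfl fun k _ => ?_
        rw [Finset.mul_sum, Finset.sum_filter]
    _ = ∑ i : Fin n, ∑ k ∈ Finset.range n,
          (if (i:ℕ) ≤ k then (r k - r (k+1)) * c i else 0) := Finset.sum_comm
    _ = ∑ i : Fin n, (r i - r n) * c i := by
        refine Finset.sum_congr rfl fun i _ => ?_
        rw [← Finset.sum_filter]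
        have hf : (Finset.range n).filter (fun k => (i:ℕ) ≤ k) = Finset.Ico (i:ℕ) n := by
          ext k
          simp only [Finset.mem_filter, Finset.mem_range, Finset.mem_Ico]
          omega
        rw [hf, ← Finset.sum_mul, tele_sum r i.isLt.le]


lemma sweep_cut {V : Type*} [Fintype V] [DecidableEq V]
    (w : V → V → ℝ) (φ : V → ℝ) (h : V → ℝ) (lam : ℝ)
    (hwnn : ∀ u v, 0 ≤ w u v) (hwsym : ∀ u v, w u v = w v u)
    (hwrow : ∀ u, ∑ v, w u v = φ u)
    (hφpos : ∀ u, 0 < φ u)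
    (hhnn : ∀ u, 0 ≤ h u) (hh0 : h ≠ 0) (hlamnn : 0 ≤ lam)
    (hE : ∑ u, ∑ v, w u v * (h u - h v)^2 ≤ 2 * lam * ∑ u, φ u * h u ^ 2) :
    ∃ S : Finset V, S.Nonempty ∧ (∀ u ∈ S, 0 < h u) ∧
      (∑ u ∈ S, ∑ v ∈ Sᶜ, w u v) ≤ Real.sqrt (2 * lam) * ∑ u ∈ S, φ u := by
  classical
  set n := Fintype.card V with hn
  set e : V ≃ Fin n := Fintype.equivFin V with he
  set σ : Equiv.Perm (Fin n) := Tuple.sort (fun i => -(h (e.symm i))^2) with hσ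
  set e' : Fin n ≃ V := σ.trans e.symm with he'
  set q : Fin n → ℝ := fun i => h (e' i) ^ 2 with hq
  have hqanti : ∀ i j : Fin n, i ≤ j → q j ≤ q i := by
    intro i j hij
    have := Tuple.monotone_sort (fun i => -(h (e.symm i))^2) hij
    simp only [Function.comp] at this
    have h2 : -(q i) ≤ -(q j) := this
    linarith
  have hqnn : ∀ i, 0 ≤ q i := fun i => sq_nonneg _
  set r : ℕ → ℝ := fun k => if hk : k < n then q ⟨k, hk⟩ else 0 with hr
  have hrnn : ∀ k, 0 ≤ r k := by
    intro k; rw [hr]; dsimp only; split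
    · exact hqnn _
    · exact le_refl 0
  have hrstep : ∀ k, r (k+1) ≤ r k := by
    intro k; rw [hr]; dsimp only
    split
    · rename_i hk1
      have hk : k < n := Nat.lt_of_succ_lt hk1
      rw [dif_pos hk]
      exact hqanti ⟨k, hk⟩ ⟨k+1, hk1⟩ (by simp)
    · split
      · exact hqnn _
      · exact le_refl 0
  have hrfin : ∀ i : Fin n, r (i : ℕ) = q i := by
    intro i; rw [hr]; dsimp only; rw [dif_pos i.isLt]
  have hrn : r n = 0 := by rw [hr]; dsimp only; rw [dif_neg (lt_irrefl n)]
  -- the sweep sets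
  set Sk : ℕ → Finset V := fun k =>
    Finset.image (⇑e') (Finset.univ.filter fun i : Fin n => (i:ℕ) ≤ k) with hSk
  have hSkmem : ∀ k (u : V), u ∈ Sk k ↔ ((e'.symm u : Fin n) : ℕ) ≤ k := by
    intro k u
    rw [hSk]; dsimp only
    simp only [Finset.mem_image, Finset.mem_filter, Finset.mem_univ, true_and]
    constructor
    · rintro ⟨i, hi, rfl⟩; rwa [Equiv.symm_apply_apply]
    · intro hu; exact ⟨e'.symm u, hu, e'.apply_symm_apply u⟩
  set vol : Finset V → ℝ := fun S => ∑ u ∈ S, φ u with hvol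
  set cutw : Finset V → ℝ := fun S => ∑ u ∈ S, ∑ v ∈ Sᶜ, w u v with hcutw
  set D : ℝ := ∑ u, φ u * h u ^ 2 with hD
  have hvolSk : ∀ k, vol (Sk k) = ∑ i ∈ Finset.univ.filter (fun i : Fin n => (i:ℕ) ≤ k), φ (e' i) := by
    intro k
    rw [hvol, hSk]; dsimp only
    rw [Finset.sum_image (fun a _ b _ hab => e'.injective hab)]
  -- Abel for D
  have hDabel : ∑ k ∈ Finset.range n, (r k - r (k+1)) * vol (Sk k) = D := by
    calc ∑ k ∈ Finset.range n, (r k - r (k+1)) * vol (Sk k)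
        = ∑ k ∈ Finset.range n, (r k - r (k+1)) *
            ∑ i ∈ Finset.univ.filter (fun i : Fin n => (i:ℕ) ≤ k), φ (e' i) := by
          exact Finset.sum_congr rfl fun k _ => by rw [hvolSk k]
      _ = ∑ i : Fin n, (r i - r n) * φ (e' i) := abel_sum r _
      _ = ∑ i : Fin n, φ (e' i) * h (e' i) ^ 2 := by
          refine Finset.sum_congr rfl fun i _ => ?_
          rw [hrfin i, hrn, hq]; ring
      _ = D := by rw [hD]; exact Fintype.sum_equiv e' _ _ (fun i => rfl)
  -- pair set
  set prs : Finset (Fin n × Fin n) :=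
    Finset.univ.filter (fun p : Fin n × Fin n => p.1 < p.2) with hprs
  set B : ℝ := ∑ p ∈ prs, w (e' p.1) (e' p.2) * (q p.1 - q p.2) with hB
  -- cut via pairs
  have hcutSk : ∀ k, cutw (Sk k) = ∑ p ∈ Finset.univ.filter
      (fun p : Fin n × Fin n => (p.1:ℕ) ≤ k ∧ k < (p.2:ℕ)), w (e' p.1) (e' p.2) := by
    intro k
    rw [hcutw]; dsimp only
    rw [← Finset.sum_product']
    refine (Finset.sum_equiv (Equiv.prodCongr e' e') ?_ ?_).symm
    · intro p
      have h1 : (Equiv.prodCongr e' e') p = (e' p.1, e' p.2) := rfl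
      rw [Finset.mem_filter, h1, Finset.mem_product, Finset.mem_compl, hSkmem, hSkmem,
        Equiv.symm_apply_apply, Equiv.symm_apply_apply]
      simp only [Finset.mem_univ, true_and]
      omega
    · intro p _; rfl
  -- Abel for B
  have hBabel : ∑ k ∈ Finset.range n, (r k - r (k+1)) * cutw (Sk k) = B := by
    have hstep : ∀ k ∈ Finset.range n, (r k - r (k+1)) * cutw (Sk k)
        = ∑ p : Fin n × Fin n,
            (if (p.1:ℕ) ≤ k ∧ k < (p.2:ℕ) then (r k - r (k+1)) * w (e' p.1) (e' p.2) else 0) := by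
      intro k _
      rw [hcutSk k, Finset.mul_sum, Finset.sum_filter]
    rw [Finset.sum_congr rfl hstep, Finset.sum_comm]
    rw [hB, hprs]
    rw [Finset.sum_filter]
    refine Finset.sum_congr rfl fun p _ => ?_
    have hfilter : (Finset.range n).filter (fun k => (p.1:ℕ) ≤ k ∧ k < (p.2:ℕ))
        = Finset.Ico (p.1:ℕ) (p.2:ℕ) := by
      ext a
      simp only [Finset.mem_filter, Finset.mem_range, Finset.mem_Ico]
      have := p.2.isLt
      omega
    rw [← Finset.sum_filter, hfilter]
    by_cases hp : p.1 < p.2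
    · rw [if_pos hp, ← Finset.sum_mul, tele_sum r (by exact_mod_cast hp.le), hrfin, hrfin]
      ring
    · rw [if_neg hp]
      have : Finset.Ico (p.1:ℕ) (p.2:ℕ) = ∅ := by
        rw [Finset.Ico_eq_empty_iff]
        intro hcon
        exact hp (by exact_mod_cast hcon)
      rw [this, Finset.sum_empty]
  have hDnn : 0 ≤ D := Finset.sum_nonneg fun u _ => mul_nonneg (hφpos u).le (sq_nonneg _)
  -- reindexing of full double sums
  have hreidx : ∀ G : V → V → ℝ, ∑ i, ∑ j, G (e' i) (e' j) = ∑ u, ∑ v, G u v := by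
    intro G
    rw [Fintype.sum_equiv e' _ (fun u => ∑ v, G u v) (fun i => ?_)]
    exact Fintype.sum_equiv e' _ _ (fun j => rfl)
  -- Cauchy-Schwarz : B ≤ √(2 lam) * D
  have hBle : B ≤ Real.sqrt (2 * lam) * D := by
    set a : Fin n × Fin n → ℝ :=
      fun p => Real.sqrt (w (e' p.1) (e' p.2)) * (h (e' p.1) - h (e' p.2)) with ha
    set b : Fin n × Fin n → ℝ :=
      fun p => Real.sqrt (w (e' p.1) (e' p.2)) * (h (e' p.1) + h (e' p.2)) with hb
    have hBa : B = ∑ p ∈ prs, a p * b p := by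
      rw [hB]
      refine Finset.sum_congr rfl fun p _ => ?_
      rw [ha, hb, hq]; dsimp only
      have hms : Real.sqrt (w (e' p.1) (e' p.2)) * Real.sqrt (w (e' p.1) (e' p.2))
          = w (e' p.1) (e' p.2) := Real.mul_self_sqrt (hwnn _ _)
      nlinarith [hms]
    have hCS := Finset.sum_mul_sq_le_sq_mul_sq prs a b
    have hsuma : ∑ p ∈ prs, a p ^ 2 ≤ lam * D := by
      have hasq : ∀ p ∈ prs, a p ^ 2
          = w (e' p.1) (e' p.2) * (h (e' p.1) - h (e' p.2))^2 := by
        intro p _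
        rw [ha]; dsimp only; rw [mul_pow, Real.sq_sqrt (hwnn _ _)]
      rw [Finset.sum_congr rfl hasq]
      have h2 := two_mul_sum_pairs_le (fun i j => w (e' i) (e' j) * (h (e' i) - h (e' j))^2)
        (fun i j => by
          show w (e' i) (e' j) * (h (e' i) - h (e' j))^2
            = w (e' j) (e' i) * (h (e' j) - h (e' i))^2
          rw [hwsym (e' i) (e' j)]; ring)
        (fun i j => mul_nonneg (hwnn _ _) (sq_nonneg _))
      rw [hreidx (fun u v => w u v * (h u - h v)^2)] at h2
      rw [← hprs] at h2
      linarith [hE]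
    have hsumw : ∑ u, ∑ v, w u v * (h u ^ 2 + h v ^ 2) = 2 * D := by
      have t1 : ∑ u, ∑ v, w u v * h u ^ 2 = D := by
        rw [hD]
        refine Finset.sum_congr rfl fun u _ => ?_
        rw [← Finset.sum_mul, hwrow]
      have t2 : ∑ u, ∑ v, w u v * h v ^ 2 = D := by
        rw [Finset.sum_comm, hD]
        refine Finset.sum_congr rfl fun v _ => ?_
        have hcol : ∑ u, w u v = φ v := by
          rw [Finset.sum_congr rfl fun u _ => hwsym u v, hwrow]
        rw [← Finset.sum_mul, hcol]
      calc ∑ u, ∑ v, w u v * (h u ^ 2 + h v ^ 2)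
          = ∑ u, ∑ v, (w u v * h u ^ 2 + w u v * h v ^ 2) := by
            refine Finset.sum_congr rfl fun u _ => Finset.sum_congr rfl fun v _ => by ring
        _ = (∑ u, ∑ v, w u v * h u ^ 2) + ∑ u, ∑ v, w u v * h v ^ 2 := by
            rw [← Finset.sum_add_distrib]
            exact Finset.sum_congr rfl fun u _ => Finset.sum_add_distrib
        _ = 2 * D := by rw [t1, t2]; ring
    have hsumb : ∑ p ∈ prs, b p ^ 2 ≤ 2 * D := by
      have hbsq : ∀ p ∈ prs, b p ^ 2
          ≤ 2 * (w (e' p.1) (e' p.2) * (h (e' p.1) ^ 2 + h (e' p.2) ^ 2)) := by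
        intro p _
        rw [hb]; dsimp only; rw [mul_pow, Real.sq_sqrt (hwnn _ _)]
        nlinarith [hwnn (e' p.1) (e' p.2), sq_nonneg (h (e' p.1) - h (e' p.2))]
      have h2 := two_mul_sum_pairs_le (fun i j => w (e' i) (e' j) * (h (e' i) ^ 2 + h (e' j) ^ 2))
        (fun i j => by
          show w (e' i) (e' j) * (h (e' i) ^ 2 + h (e' j) ^ 2)
            = w (e' j) (e' i) * (h (e' j) ^ 2 + h (e' i) ^ 2)
          rw [hwsym (e' i) (e' j)]; ring)
        (fun i j => mul_nonneg (hwnn _ _) (by positivity))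
      rw [hreidx (fun u v => w u v * (h u ^ 2 + h v ^ 2)), hsumw, ← hprs] at h2
      have h3 : ∑ p ∈ prs, b p ^ 2
          ≤ ∑ p ∈ prs, 2 * (w (e' p.1) (e' p.2) * (h (e' p.1) ^ 2 + h (e' p.2) ^ 2)) :=
        Finset.sum_le_sum hbsq
      rw [← Finset.mul_sum] at h3
      linarith
    have hanns : 0 ≤ ∑ p ∈ prs, a p ^ 2 := Finset.sum_nonneg fun p _ => sq_nonneg _
    have hbnns : 0 ≤ ∑ p ∈ prs, b p ^ 2 := Finset.sum_nonneg fun p _ => sq_nonneg _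
    have hB2 : B ^ 2 ≤ (2 * lam) * D ^ 2 := by
      rw [hBa]
      calc (∑ p ∈ prs, a p * b p) ^ 2 ≤ (∑ p ∈ prs, a p ^ 2) * ∑ p ∈ prs, b p ^ 2 := hCS
        _ ≤ (lam * D) * (2 * D) := by
            apply mul_le_mul hsuma hsumb hbnns (by positivity)
        _ = (2 * lam) * D ^ 2 := by ring
    calc B ≤ |B| := le_abs_self B
      _ = Real.sqrt (B ^ 2) := (Real.sqrt_sq_eq_abs B).symm
      _ ≤ Real.sqrt ((2 * lam) * D ^ 2) := Real.sqrt_le_sqrt hB2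
      _ = Real.sqrt (2 * lam) * D := by
          rw [Real.sqrt_mul (by positivity), Real.sqrt_sq hDnn]
  -- contradiction
  by_contra hcon
  push_neg at hcon
  have hVne : Nonempty V := by
    obtain ⟨u, hu⟩ := Function.ne_iff.mp hh0
    exact ⟨u⟩
  have hnpos : 0 < n := by rw [hn]; exact Fintype.card_pos
  have hr0pos : 0 < r 0 := by
    obtain ⟨u, hu⟩ := Function.ne_iff.mp hh0
    have h1 : 0 < q (e'.symm u) := by
      rw [hq]; dsimp only; rw [Equiv.apply_symm_apply]
      have : h u ≠ 0 := hu
      positivity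
    have h2 : q (e'.symm u) ≤ q ⟨0, hnpos⟩ := hqanti _ _ (by simp [Fin.le_def])
    have h3 : r ((⟨0, hnpos⟩ : Fin n) : ℕ) = q ⟨0, hnpos⟩ := hrfin ⟨0, hnpos⟩
    simp only [Fin.val_mk] at h3
    linarith
  set C : ℝ := Real.sqrt (2 * lam) with hC
  have hclaim : ∀ k ∈ Finset.range n, 0 < r k - r (k+1) →
      0 < (r k - r (k+1)) * (cutw (Sk k) - C * vol (Sk k)) := by
    intro k _ hΔ
    have hrk : 0 < r k := lt_of_lt_of_le hΔ (by linarith [hrnn (k+1)])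
    have hkn : k < n := by
      by_contra hkn
      have : r k = 0 := by rw [hr]; dsimp only; rw [dif_neg hkn]
      linarith
    have hrq : r k = q ⟨k, hkn⟩ := by rw [hr]; dsimp only; rw [dif_pos hkn]
    have hSne : (Sk k).Nonempty := by
      refine ⟨e' ⟨0, hnpos⟩, ?_⟩
      rw [hSkmem]
      simp [Equiv.symm_apply_apply]
    have hSpos : ∀ u ∈ Sk k, 0 < h u := by
      intro u hu
      rw [hSkmem] at hu
      have h1 : q ⟨k, hkn⟩ ≤ q (e'.symm u) := hqanti _ _ (by rwa [Fin.le_def])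
      have h2 : 0 < q (e'.symm u) := by linarith [hrq ▸ hrk]
      rw [hq] at h2; dsimp only at h2; rw [Equiv.apply_symm_apply] at h2
      rcases (hhnn u).lt_or_eq with hlt | heq
      · exact hlt
      · exfalso; rw [← heq] at h2; simp at h2
    have hcc : C * vol (Sk k) < cutw (Sk k) := hcon (Sk k) hSne hSpos
    exact mul_pos hΔ (by linarith)
  have hTnn : ∀ k ∈ Finset.range n,
      0 ≤ (r k - r (k+1)) * (cutw (Sk k) - C * vol (Sk k)) := by
    intro k hk
    rcases (hrstep k).lt_or_eq with hlt | heq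
    · exact (hclaim k hk (by linarith)).le
    · rw [heq]; simp
  have hex : ∃ k ∈ Finset.range n, 0 < r k - r (k+1) := by
    by_contra hek; push_neg at hek
    have hsn : ∑ k ∈ Finset.range n, (r k - r (k+1)) ≤ 0 :=
      Finset.sum_nonpos hek
    rw [Finset.sum_range_sub' r, hrn] at hsn
    linarith
  obtain ⟨k₀, hk₀, hΔ₀⟩ := hex
  have hpos : 0 < ∑ k ∈ Finset.range n, (r k - r (k+1)) * (cutw (Sk k) - C * vol (Sk k)) :=
    Finset.sum_pos' hTnn ⟨k₀, hk₀, hclaim k₀ hk₀ hΔ₀⟩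
  have heq : ∑ k ∈ Finset.range n, (r k - r (k+1)) * (cutw (Sk k) - C * vol (Sk k))
      = B - C * D := by
    rw [← hBabel, ← hDabel, Finset.mul_sum, ← Finset.sum_sub_distrib]
    exact Finset.sum_congr rfl fun k _ => by ring
  rw [heq] at hpos
  linarith
/-- Hard direction of the hypergraph Cheeger inequality: the second smallest
eigenvalue `λ` of `L_sym` (characterized variationally as the minimum of the
Rayleigh quotient `xᵀLx / xᵀΠx` over nonzero `x` with `x ⊥ Π𝟙`) satisfies
`λ ≥ Φ(H)²/2`. -/
theorem cheeger_hard_direction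
    {V : Type*} [Fintype V] [DecidableEq V]
    (P : Matrix V V ℝ) (hnn : ∀ u v, 0 ≤ P u v) (hrow : ∀ u, ∑ v, P u v = 1)
    (φ : V → ℝ) (hφpos : ∀ u, 0 < φ u) (hφsum : ∑ u, φ u = 1)
    (hstat : ∀ v, ∑ u, φ u * P u v = φ v)
    (L : Matrix V V ℝ)
    (hL : L = Matrix.diagonal φ -
      (2⁻¹ : ℝ) • (Matrix.diagonal φ * P + Pᵀ * Matrix.diagonal φ))
    (lam : ℝ)
    (hlam : IsLeast {r : ℝ | ∃ x : V → ℝ, x ≠ 0 ∧ (∑ u, φ u * x u) = 0 ∧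
      r = (x ⬝ᵥ L.mulVec x) / (∑ u, φ u * (x u) ^ 2)} lam)
    (PhiH : ℝ)
    (hPhiH : IsLeast {r : ℝ | ∃ S : Finset V, S.Nonempty ∧ S ≠ Finset.univ ∧
      r = (∑ u ∈ S, ∑ v ∈ Sᶜ, φ u * P u v) /
            min (∑ u ∈ S, φ u) (∑ u ∈ Sᶜ, φ u)} PhiH) :
    PhiH ^ 2 / 2 ≤ lam := by
  classical
  obtain ⟨⟨x, hx0, hxorth, hxR⟩, hlb⟩ := hlam
  -- the symmetrized weights
  set w : V → V → ℝ := fun u v => (φ u * P u v + φ v * P v u)/2 with hw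
  have hwnn : ∀ u v, 0 ≤ w u v := by
    intro u v; rw [hw]; dsimp only
    have h1 := mul_nonneg (hφpos u).le (hnn u v)
    have h2 := mul_nonneg (hφpos v).le (hnn v u)
    linarith
  have hwsym : ∀ u v, w u v = w v u := by intro u v; rw [hw]; dsimp only; ring
  have hwrow : ∀ u, ∑ v, w u v = φ u := by
    intro u
    rw [hw]; dsimp only
    have h1 : ∑ v, φ u * P u v = φ u := by rw [← Finset.mul_sum, hrow u, mul_one]
    have h2 : ∑ v, φ v * P v u = φ u := hstat u
    rw [show (fun v => (φ u * P u v + φ v * P v u)/2) = fun v => (φ u * P u v + φ v * P v u)/2 from rfl]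
    calc ∑ v, (φ u * P u v + φ v * P v u)/2
        = (∑ v, (φ u * P u v + φ v * P v u))/2 := by rw [Finset.sum_div]
      _ = ((∑ v, φ u * P u v) + ∑ v, φ v * P v u)/2 := by rw [Finset.sum_add_distrib]
      _ = φ u := by rw [h1, h2]; ring
  -- energy and mass
  set Ee : (V → ℝ) → ℝ := fun z => ∑ u, ∑ v, w u v * (z u - z v)^2 with hEe
  set Dd : (V → ℝ) → ℝ := fun z => ∑ u, φ u * z u ^ 2 with hDd
  have hEnn : ∀ z, 0 ≤ Ee z := by
    intro z; rw [hEe]; dsimp only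
    exact Finset.sum_nonneg fun u _ => Finset.sum_nonneg fun v _ =>
      mul_nonneg (hwnn u v) (sq_nonneg _)
  have hDnn : ∀ z, 0 ≤ Dd z := by
    intro z; rw [hDd]; dsimp only
    exact Finset.sum_nonneg fun u _ => mul_nonneg (hφpos u).le (sq_nonneg _)
  -- quadratic form identity
  have hquad : ∀ z : V → ℝ, z ⬝ᵥ L.mulVec z = Ee z / 2 := by
    intro z
    have hLuv : ∀ u v, L u v = (if u = v then φ u else 0) - w u v := by
      intro u v
      rw [hL, hw]
      simp only [Matrix.sub_apply, Matrix.smul_apply, Matrix.add_apply,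
        Matrix.diagonal_apply, Matrix.diagonal_mul, Matrix.mul_diagonal,
        Matrix.transpose_apply, smul_eq_mul]
      ring
    have hdot : z ⬝ᵥ L.mulVec z = ∑ u, ∑ v, z u * (L u v * z v) := by
      simp [dotProduct, Matrix.mulVec, Finset.mul_sum]
    have hkey : ∀ u, ∑ v, z u * (L u v * z v)
        = φ u * z u ^ 2 - ∑ v, w u v * (z u * z v) := by
      intro u
      have hterm : ∀ v, z u * (L u v * z v)
          = (if u = v then φ u * (z u * z v) else 0) - w u v * (z u * z v) := by
        intro v
        rw [hLuv u v]
        split <;> ring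
      rw [Finset.sum_congr rfl fun v _ => hterm v, Finset.sum_sub_distrib,
        Finset.sum_ite_eq Finset.univ u (fun v => φ u * (z u * z v))]
      simp only [Finset.mem_univ, if_true]
      congr 1
      ring
    have hEexp : Ee z = 2 * (∑ u, φ u * z u ^ 2) - 2 * ∑ u, ∑ v, w u v * (z u * z v) := by
      rw [hEe]; dsimp only
      have t1 : ∑ u, ∑ v, w u v * z u ^ 2 = ∑ u, φ u * z u ^ 2 := by
        refine Finset.sum_congr rfl fun u _ => ?_
        rw [← Finset.sum_mul, hwrow]
      have t2 : ∑ u, ∑ v, w u v * z v ^ 2 = ∑ u, φ u * z u ^ 2 := by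
        rw [Finset.sum_comm]
        refine Finset.sum_congr rfl fun v _ => ?_
        have hcol : ∑ u, w u v = φ v := by
          rw [Finset.sum_congr rfl fun u _ => hwsym u v, hwrow]
        rw [← Finset.sum_mul, hcol]
      calc ∑ u, ∑ v, w u v * (z u - z v)^2
          = ∑ u, ∑ v, (w u v * z u ^ 2 + w u v * z v ^ 2 - 2 * (w u v * (z u * z v))) := by
            refine Finset.sum_congr rfl fun u _ => Finset.sum_congr rfl fun v _ => by ring
        _ = ∑ u, ((∑ v, w u v * z u ^ 2) + (∑ v, w u v * z v ^ 2)
              - 2 * ∑ v, w u v * (z u * z v)) := by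
            refine Finset.sum_congr rfl fun u _ => ?_
            rw [Finset.sum_sub_distrib, Finset.sum_add_distrib, ← Finset.mul_sum]
        _ = (∑ u, ∑ v, w u v * z u ^ 2) + (∑ u, ∑ v, w u v * z v ^ 2)
              - 2 * ∑ u, ∑ v, w u v * (z u * z v) := by
            rw [Finset.sum_sub_distrib, Finset.sum_add_distrib, ← Finset.mul_sum]
        _ = 2 * (∑ u, φ u * z u ^ 2) - 2 * ∑ u, ∑ v, w u v * (z u * z v) := by
            rw [t1, t2]; ring
    rw [hdot, Finset.sum_congr rfl fun u _ => hkey u, Finset.sum_sub_distrib, hEexp]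
    ring
  -- basic facts about x
  have hDxpos : 0 < Dd x := by
    obtain ⟨u₀, hu₀⟩ := Function.ne_iff.mp hx0
    rw [hDd]; dsimp only
    refine Finset.sum_pos' (fun u _ => mul_nonneg (hφpos u).le (sq_nonneg _))
      ⟨u₀, Finset.mem_univ u₀, ?_⟩
    have hne : x u₀ ≠ 0 := hu₀
    exact mul_pos (hφpos u₀) (by positivity)
  have hxRE : lam = (Ee x / 2) / Dd x := by
    rw [hxR, hquad x]
  have hlamnn : 0 ≤ lam := by
    rw [hxRE]
    exact div_nonneg (by linarith [hEnn x]) (hDnn x)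
  have hlamE : 2 * lam * Dd x = Ee x := by
    rw [hxRE]
    field_simp
  -- weighted median
  obtain ⟨u₀, hu₀⟩ := Function.ne_iff.mp hx0
  have hVne : Nonempty V := ⟨u₀⟩
  set A : Finset V := Finset.univ.filter
    (fun v => (1:ℝ)/2 ≤ ∑ u ∈ Finset.univ.filter (fun u => x u ≤ x v), φ u) with hA
  have hAne : A.Nonempty := by
    obtain ⟨vmax, -, hvmax⟩ := Finset.exists_max_image (Finset.univ : Finset V) x
      Finset.univ_nonempty
    refine ⟨vmax, ?_⟩
    rw [hA, Finset.mem_filter]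
    refine ⟨Finset.mem_univ _, ?_⟩
    rw [Finset.filter_true_of_mem (fun u hu => hvmax u hu), hφsum]
    norm_num
  obtain ⟨v₀, hv₀A, hv₀min⟩ := Finset.exists_min_image A x hAne
  set c : ℝ := x v₀ with hc
  have hhalf : (1:ℝ)/2 ≤ ∑ u ∈ Finset.univ.filter (fun u => x u ≤ c), φ u := by
    rw [hA, Finset.mem_filter] at hv₀A
    exact hv₀A.2
  have hvolgt : ∑ u ∈ Finset.univ.filter (fun u => c < x u), φ u ≤ 1/2 := by
    have hsplit := Finset.sum_filter_add_sum_filter_not Finset.univ (fun u => x u ≤ c) φ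
    have hfe : Finset.univ.filter (fun u => ¬ x u ≤ c) = Finset.univ.filter (fun u => c < x u) := by
      ext u; simp [not_le]
    rw [hfe, hφsum] at hsplit
    linarith
  have hvollt : ∑ u ∈ Finset.univ.filter (fun u => x u < c), φ u ≤ 1/2 := by
    rcases (Finset.univ.filter (fun u => x u < c)).eq_empty_or_nonempty with hempty | hne2
    · rw [hempty, Finset.sum_empty]; norm_num
    · obtain ⟨vs, hvsmem, hvsmax⟩ := Finset.exists_max_image _ x hne2
      have hvslt : x vs < c := (Finset.mem_filter.mp hvsmem).2
      have hvsnA : vs ∉ A := by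
        intro hmem3
        have := hv₀min vs hmem3
        linarith
      have hvs2 : ∑ u ∈ Finset.univ.filter (fun u => x u ≤ x vs), φ u < 1/2 := by
        by_contra hge; push_neg at hge
        exact hvsnA (by rw [hA, Finset.mem_filter]; exact ⟨Finset.mem_univ vs, hge⟩)
      have hsub2 : Finset.univ.filter (fun u => x u < c)
          ⊆ Finset.univ.filter (fun u => x u ≤ x vs) := by
        intro u hu
        rw [Finset.mem_filter] at hu ⊢
        exact ⟨hu.1, hvsmax u (Finset.mem_filter.mpr hu)⟩
      have := Finset.sum_le_sum_of_subset_of_nonneg hsub2 (fun u _ _ => (hφpos u).le)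
      linarith
  -- positive and negative parts
  set f : V → ℝ := fun u => max (x u - c) 0 with hf
  set g : V → ℝ := fun u => max (c - x u) 0 with hg
  have hfnn : ∀ u, 0 ≤ f u := fun u => le_max_right _ _
  have hgnn : ∀ u, 0 ≤ g u := fun u => le_max_right _ _
  have hfg0 : ∀ u, f u * g u = 0 := by
    intro u
    rw [hf, hg]; dsimp only
    rcases le_total (x u) c with hle | hle
    · rw [max_eq_right (by linarith), zero_mul]
    · rw [max_eq_right (by linarith : c - x u ≤ 0), mul_zero]
  have hfgy : ∀ u, f u - g u = x u - c := by
    intro u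
    rw [hf, hg]; dsimp only
    rcases le_total (x u) c with hle | hle
    · rw [max_eq_right (by linarith), max_eq_left (by linarith)]; ring
    · rw [max_eq_left (by linarith), max_eq_right (by linarith : c - x u ≤ 0)]; ring
  -- energies
  have hEy : Ee (fun u => x u - c) = Ee x := by
    rw [hEe]; dsimp only
    exact Finset.sum_congr rfl fun u _ => Finset.sum_congr rfl fun v _ => by ring_nf
  have hDy : Dd (fun u => x u - c) = Dd x + c^2 := by
    rw [hDd]; dsimp only
    calc ∑ u, φ u * (x u - c)^2
        = ∑ u, (φ u * x u^2 - 2*c*(φ u * x u) + c^2 * φ u) :=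
          Finset.sum_congr rfl fun u _ => by ring
      _ = (∑ u, (φ u * x u^2 - 2*c*(φ u * x u))) + c^2 * ∑ u, φ u := by
          rw [Finset.sum_add_distrib, ← Finset.mul_sum]
      _ = (∑ u, φ u * x u^2) - 2*c*(∑ u, φ u * x u) + c^2 * ∑ u, φ u := by
          rw [Finset.sum_sub_distrib, ← Finset.mul_sum]
      _ = Dd x + c^2 := by rw [hxorth, hφsum, hDd]; ring
  have hEfg : Ee f + Ee g ≤ Ee (fun u => x u - c) := by
    rw [hEe]; dsimp only
    rw [← Finset.sum_add_distrib]
    refine Finset.sum_le_sum fun u _ => ?_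
    rw [← Finset.sum_add_distrib]
    refine Finset.sum_le_sum fun v _ => ?_
    rw [← hfgy u, ← hfgy v]
    nlinarith [hfg0 u, hfg0 v, hwnn u v,
      mul_nonneg (mul_nonneg (hwnn u v) (hfnn u)) (hgnn v),
      mul_nonneg (mul_nonneg (hwnn u v) (hfnn v)) (hgnn u)]
  have hDfg : Dd f + Dd g = Dd (fun u => x u - c) := by
    rw [hDd]; dsimp only
    rw [← Finset.sum_add_distrib]
    refine Finset.sum_congr rfl fun u _ => ?_
    rw [← hfgy u]
    linear_combination (2 * φ u) * hfg0 u
  have hEyle : Ee (fun u => x u - c) ≤ 2 * lam * Dd (fun u => x u - c) := by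
    rw [hEy, hDy]
    nlinarith [mul_nonneg hlamnn (sq_nonneg c), hlamE]
  -- choose the good half
  have hsumEfg : Ee f + Ee g ≤ 2 * lam * (Dd f + Dd g) := by
    rw [hDfg]; linarith [hEyle, hEfg]
  have hfsupp : (∑ u ∈ Finset.univ.filter (fun u => 0 < f u), φ u) ≤ 1/2 := by
    have hfe : Finset.univ.filter (fun u => 0 < f u)
        = Finset.univ.filter (fun u => c < x u) := by
      ext u
      rw [Finset.mem_filter, Finset.mem_filter, hf]
      dsimp only
      rw [lt_max_iff]
      constructor
      · rintro ⟨h1, h2 | h2⟩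
        · exact ⟨h1, by linarith⟩
        · exact absurd h2 (lt_irrefl 0)
      · rintro ⟨h1, h2⟩; exact ⟨h1, Or.inl (by linarith)⟩
    rw [hfe]; exact hvolgt
  have hgsupp : (∑ u ∈ Finset.univ.filter (fun u => 0 < g u), φ u) ≤ 1/2 := by
    have hge : Finset.univ.filter (fun u => 0 < g u)
        = Finset.univ.filter (fun u => x u < c) := by
      ext u
      rw [Finset.mem_filter, Finset.mem_filter, hg]
      dsimp only
      rw [lt_max_iff]
      constructor
      · rintro ⟨h1, h2 | h2⟩
        · exact ⟨h1, by linarith⟩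
        · exact absurd h2 (lt_irrefl 0)
      · rintro ⟨h1, h2⟩; exact ⟨h1, Or.inl (by linarith)⟩
    rw [hge]; exact hvollt
  have hDzero : ∀ z : V → ℝ, z = 0 → Dd z = 0 ∧ Ee z = 0 := by
    intro z hz
    subst hz
    constructor
    · rw [hDd]; simp
    · rw [hEe]; simp
  have hnotboth : ¬ (f = 0 ∧ g = 0) := by
    rintro ⟨hf0, hg0⟩
    have hxc : ∀ u, x u = c := by
      intro u
      have h1 := hfgy u
      rw [hf0, hg0] at h1
      simp only [Pi.zero_apply, sub_zero, sub_self] at h1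
      linarith [h1]
    have hceq : ∑ u, φ u * x u = c := by
      calc ∑ u, φ u * x u = ∑ u, φ u * c :=
            Finset.sum_congr rfl fun u _ => by rw [hxc u]
        _ = (∑ u, φ u) * c := by rw [Finset.sum_mul]
        _ = c := by rw [hφsum, one_mul]
    rw [hxorth] at hceq
    apply hx0
    funext u
    rw [Pi.zero_apply, hxc u, ← hceq]
  have hchoice : ∃ hh : V → ℝ, (∀ u, 0 ≤ hh u) ∧ hh ≠ 0 ∧ Ee hh ≤ 2 * lam * Dd hh ∧
      (∑ u ∈ Finset.univ.filter (fun u => 0 < hh u), φ u) ≤ 1/2 := by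
    by_cases hf0 : f = 0
    · have hgne : g ≠ 0 := fun hg0 => hnotboth ⟨hf0, hg0⟩
      obtain ⟨hDf0, hEf0⟩ := hDzero f hf0
      rw [hEf0, hDf0, zero_add, zero_add] at hsumEfg
      exact ⟨g, hgnn, hgne, hsumEfg, hgsupp⟩
    · by_cases hEfle : Ee f ≤ 2 * lam * Dd f
      · exact ⟨f, hfnn, hf0, hEfle, hfsupp⟩
      · have h1 : Ee g < 2 * lam * Dd g := by
          have hexp : 2*lam*(Dd f + Dd g) = 2*lam*Dd f + 2*lam*Dd g := by ring
          linarith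
        have hgne : g ≠ 0 := by
          intro hg0
          obtain ⟨hDg0, hEg0⟩ := hDzero g hg0
          rw [hDg0, hEg0] at h1
          simp at h1
        exact ⟨g, hgnn, hgne, h1.le, hgsupp⟩
  obtain ⟨h, hhnn, hh0, hEh, hsupp⟩ := hchoice
  -- apply the sweep-cut lemma
  have hEh' : ∑ u, ∑ v, w u v * (h u - h v)^2 ≤ 2 * lam * ∑ u, φ u * h u ^ 2 := by
    have h2 := hEh
    rw [hEe, hDd] at h2
    exact h2
  obtain ⟨S, hSne, hSpos, hScut⟩ :=
    sweep_cut w φ h lam hwnn hwsym hwrow hφpos hhnn hh0 hlamnn hEh'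
  -- convert the symmetric cut into the directed cut
  have hcutP : ∑ u ∈ S, ∑ v ∈ Sᶜ, w u v = ∑ u ∈ S, ∑ v ∈ Sᶜ, φ u * P u v := by
    have key : ∑ u ∈ S, ∑ v ∈ Sᶜ, φ v * P v u = ∑ u ∈ S, ∑ v ∈ Sᶜ, φ u * P u v := by
      have t1 : ∀ u, ∑ v ∈ Sᶜ, φ v * P v u = φ u - ∑ v ∈ S, φ v * P v u := by
        intro u
        have h3 := Finset.sum_add_sum_compl S (fun v => φ v * P v u)
        rw [hstat u] at h3
        linarith
      have t2 : ∀ u, ∑ v ∈ Sᶜ, φ u * P u v = φ u - ∑ v ∈ S, φ u * P u v := by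
        intro u
        have h3 := Finset.sum_add_sum_compl S (fun v => φ u * P u v)
        have h4 : ∑ v, φ u * P u v = φ u := by rw [← Finset.mul_sum, hrow u, mul_one]
        rw [h4] at h3
        linarith
      rw [Finset.sum_congr rfl fun u _ => t1 u, Finset.sum_congr rfl fun u _ => t2 u,
        Finset.sum_sub_distrib, Finset.sum_sub_distrib]
      congr 1
      exact Finset.sum_comm
    calc ∑ u ∈ S, ∑ v ∈ Sᶜ, w u v
        = ∑ u ∈ S, (((∑ v ∈ Sᶜ, φ u * P u v) + ∑ v ∈ Sᶜ, φ v * P v u)/2) := by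
          refine Finset.sum_congr rfl fun u _ => ?_
          rw [← Finset.sum_add_distrib, Finset.sum_div]
      _ = ((∑ u ∈ S, ∑ v ∈ Sᶜ, φ u * P u v) + ∑ u ∈ S, ∑ v ∈ Sᶜ, φ v * P v u)/2 := by
          rw [← Finset.sum_add_distrib, Finset.sum_div]
      _ = ∑ u ∈ S, ∑ v ∈ Sᶜ, φ u * P u v := by rw [key]; ring
  -- final accounting
  have hvolpos : 0 < ∑ u ∈ S, φ u := Finset.sum_pos (fun u _ => hφpos u) hSne
  have hvolhalf : ∑ u ∈ S, φ u ≤ 1/2 := by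
    have hsub : S ⊆ Finset.univ.filter (fun u => 0 < h u) := fun u hu =>
      Finset.mem_filter.mpr ⟨Finset.mem_univ u, hSpos u hu⟩
    exact le_trans (Finset.sum_le_sum_of_subset_of_nonneg hsub
      (fun u _ _ => (hφpos u).le)) hsupp
  have hSnu : S ≠ Finset.univ := by
    intro heq
    rw [heq, hφsum] at hvolhalf
    linarith
  have hcompl : ∑ u ∈ Sᶜ, φ u = 1 - ∑ u ∈ S, φ u := by
    have h3 := Finset.sum_add_sum_compl S φ
    rw [hφsum] at h3
    linarith
  have hminv : min (∑ u ∈ S, φ u) (∑ u ∈ Sᶜ, φ u) = ∑ u ∈ S, φ u := by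
    apply min_eq_left
    rw [hcompl]
    linarith
  have hPhile : PhiH ≤ Real.sqrt (2*lam) := by
    have hmem2 : (∑ u ∈ S, ∑ v ∈ Sᶜ, φ u * P u v) /
        min (∑ u ∈ S, φ u) (∑ u ∈ Sᶜ, φ u)
        ∈ {r : ℝ | ∃ S : Finset V, S.Nonempty ∧ S ≠ Finset.univ ∧
          r = (∑ u ∈ S, ∑ v ∈ Sᶜ, φ u * P u v) /
            min (∑ u ∈ S, φ u) (∑ u ∈ Sᶜ, φ u)} := ⟨S, hSne, hSnu, rfl⟩
    have h5 := hPhiH.2 hmem2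
    rw [hminv] at h5
    have h7 : (∑ u ∈ S, ∑ v ∈ Sᶜ, φ u * P u v) / (∑ u ∈ S, φ u) ≤ Real.sqrt (2*lam) := by
      rw [div_le_iff₀ hvolpos, ← hcutP]
      exact hScut
    linarith
  have hPhinn : 0 ≤ PhiH := by
    obtain ⟨S₀, hS₀ne, hS₀nu, hPhieq⟩ := hPhiH.1
    rw [hPhieq]
    apply div_nonneg
    · exact Finset.sum_nonneg fun u _ => Finset.sum_nonneg fun v _ =>
        mul_nonneg (hφpos u).le (hnn u v)
    · exact le_min (Finset.sum_nonneg fun u _ => (hφpos u).le)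
        (Finset.sum_nonneg fun u _ => (hφpos u).le)
  have hfin : PhiH^2 ≤ 2*lam := by
    have h8 : PhiH^2 ≤ (Real.sqrt (2*lam))^2 := pow_le_pow_left₀ hPhinn hPhile 2
    rwa [Real.sq_sqrt (by linarith : (0:ℝ) ≤ 2*lam)] at h8
  linarith
end
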